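/- arXiv:1707.08171 — 3 statements merged into one kernel-verified Lean document; each statement's English description precedes it below -/
import Mathlib

section
/- Let f : ℂⁿ ⇢ ℂⁿ be a meromorphic map (defined on the complement of an analytic subset) that is a local diffeomorphism at some point. Then its group of periods Λ_f := { a ∈ ℂⁿ | f(u) = f(u + a) for all u where both sides are defined } is a discrete subgroup of ℂⁿ. -/
/-- A meromorphic map `ℂⁿ ⇢ ℂⁿ`: each component is a quotient of two entire
functions, the denominator not being identically zero. -/
structure MeroMap (n : ℕ) where
  num : Fin n → ((Fin n → ℂ) → ℂ)
  den : Fin n → ((Fin n → ℂ) → ℂ)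
  num_analytic : ∀ i, AnalyticOnNhd ℂ (num i) Set.univ
  den_analytic : ∀ i, AnalyticOnNhd ℂ (den i) Set.univ
  den_ne_zero : ∀ i, ∃ u, den i u ≠ 0

namespace MeroMap

/-- The value function of a meromorphic map (junk values where a denominator vanishes). -/
noncomputable def val {n : ℕ} (f : MeroMap n) : (Fin n → ℂ) → (Fin n → ℂ) :=
  fun u i => f.num i u / f.den i u

/-- The set of periods of a meromorphic map: `a` is a period if `f(u) = f(u+a)` as
meromorphic functions, i.e. `gᵢ(u)·hᵢ(u+a) = hᵢ(u)·gᵢ(u+a)` for all `u`, where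
`fᵢ = gᵢ/hᵢ`. -/
def periodSet {n : ℕ} (f : MeroMap n) : Set (Fin n → ℂ) :=
  {a | ∀ i u, f.num i u * f.den i (u + a) = f.den i u * f.num i (u + a)}

/-- The group of periods `Λ_f` (the subgroup generated by the period set; the period set
is in fact already a subgroup). -/
noncomputable def periods {n : ℕ} (f : MeroMap n) : AddSubgroup (Fin n → ℂ) :=
  AddSubgroup.closure f.periodSet

end MeroMap


/-! A period `a` satisfies `gᵢ(u)·hᵢ(u+a) = hᵢ(u)·gᵢ(u+a)`. Chaining the relations for `a` and `b`
gives the relation for `a + b` multiplied by the entire function `hᵢ(u+a)·gᵢ(u+a)`, a factor that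
the identity theorem lets us cancel unless `gᵢ ≡ 0`; so the period set is already a group. Since
`f` has invertible differential at `p`, `f u ≠ f p` on a punctured neighbourhood of `p`, whereas
`f (p + a) = f p` for every period `a`; hence `0` is isolated among the periods. -/

open Filter Set Topology

section

variable {𝕜 E F : Type*} [NontriviallyNormedField 𝕜] [NormedAddCommGroup E] [NormedSpace 𝕜 E]
  [NormedAddCommGroup F] [NormedSpace 𝕜 F]

theorem AnalyticOnNhd.comp_add_right {f : E → F} (hf : AnalyticOnNhd 𝕜 f univ) (a : E) :
    AnalyticOnNhd 𝕜 (fun u => f (u + a)) univ :=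
  hf.comp (analyticOnNhd_id.add analyticOnNhd_const) (mapsTo_univ _ _)

theorem AnalyticOnNhd.eq_zero_of_mul_eq_zero [PreconnectedSpace E] {f g : E → 𝕜}
    (hf : AnalyticOnNhd 𝕜 f univ) (hg : Continuous g) (hfg : f * g = 0) (hg₀ : g ≠ 0) :
    f = 0 := by
  obtain ⟨u₀, hu₀⟩ := Function.ne_iff.1 hg₀
  refine hf.eq_of_eventuallyEq analyticOnNhd_const (z₀ := u₀) ?_
  filter_upwards [hg.continuousAt.eventually_ne hu₀] with u hu
  exact (mul_eq_zero.1 (congrFun hfg u)).resolve_right hu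

end

theorem AddSubgroup.discreteTopology_of_eventually_notMem {G : Type*} [AddGroup G]
    [TopologicalSpace G] [IsTopologicalAddGroup G] (H : AddSubgroup G)
    (h : ∀ᶠ a in 𝓝[≠] (0 : G), a ∉ H) : DiscreteTopology H := by
  obtain ⟨V, hV, h₀V, hVH⟩ := mem_nhdsWithin.1 h
  refine discreteTopology_of_isOpen_singleton_zero ?_
  convert hV.preimage continuous_subtype_val
  ext ⟨a, ha⟩
  simp only [mem_singleton_iff, mem_preimage, AddSubgroup.mk_eq_zero]
  refine ⟨fun h => h ▸ h₀V, fun haV => ?_⟩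
  by_contra ha₀
  exact hVH ⟨haV, ha₀⟩ ha

namespace MeroMap

variable {n : ℕ} (f : MeroMap n)

theorem den_ne_zero' (i : Fin n) : f.den i ≠ 0 := fun h => by
  obtain ⟨u, hu⟩ := f.den_ne_zero i
  exact hu (congrFun h u)

theorem continuous_den (i : Fin n) : Continuous (f.den i) :=
  (f.den_analytic i).continuous

theorem zero_mem_periodSet : (0 : Fin n → ℂ) ∈ f.periodSet := fun i u => by
  simp only [add_zero, mul_comm]

theorem neg_mem_periodSet {a : Fin n → ℂ} (ha : a ∈ f.periodSet) : -a ∈ f.periodSet :=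
  fun i u => by
    have h := ha i (u + -a)
    rw [neg_add_cancel_right] at h
    linear_combination -h

theorem add_mem_periodSet {a b : Fin n → ℂ} (ha : a ∈ f.periodSet) (hb : b ∈ f.periodSet) :
    a + b ∈ f.periodSet := by
  intro i
  by_cases hnum : f.num i = 0
  · simp [hnum]
  set F := fun u => f.num i u * f.den i (u + (a + b)) - f.den i u * f.num i (u + (a + b))
  set G := fun u => f.den i (u + a) * f.num i (u + a)
  -- The period relations for `a` at `u` and for `b` at `u + a` combine to `F u * G u = 0`.
  have hFG : F * G = 0 := funext fun u => by
    have hb' := hb i (u + a)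
    rw [add_assoc] at hb'
    simp only [F, G, Pi.mul_apply, Pi.zero_apply]
    linear_combination f.num i (u + a) * f.den i (u + (a + b)) * ha i u
      + f.den i u * f.num i (u + a) * hb'
  have hG : G ≠ 0 := fun hG => by
    refine hnum ((f.num_analytic i).eq_zero_of_mul_eq_zero (f.continuous_den i) ?_
      (f.den_ne_zero' i))
    funext v
    simpa [G, mul_comm] using congrFun hG (v - a)
  have hF_analytic : AnalyticOnNhd ℂ F univ :=
    ((f.num_analytic i).mul ((f.den_analytic i).comp_add_right _)).sub
      ((f.den_analytic i).mul ((f.num_analytic i).comp_add_right _))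
  have hG_continuous : Continuous G :=
    ((f.den_analytic i).comp_add_right a).continuous.mul
      ((f.num_analytic i).comp_add_right a).continuous
  intro u
  exact sub_eq_zero.1 (congrFun (hF_analytic.eq_zero_of_mul_eq_zero hG_continuous hFG hG) u)

def periodSubgroup : AddSubgroup (Fin n → ℂ) where
  carrier := f.periodSet
  add_mem' := f.add_mem_periodSet
  zero_mem' := f.zero_mem_periodSet
  neg_mem' := f.neg_mem_periodSet

theorem mem_periods {a : Fin n → ℂ} : a ∈ f.periods ↔ a ∈ f.periodSet := by
  change a ∈ AddSubgroup.closure (f.periodSubgroup : Set (Fin n → ℂ)) ↔ _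
  rw [AddSubgroup.closure_eq]
  rfl

theorem analyticAt_val {p : Fin n → ℂ} (hden : ∀ i, f.den i p ≠ 0) : AnalyticAt ℂ f.val p :=
  AnalyticAt.pi fun i => (f.num_analytic i p trivial).div (f.den_analytic i p trivial) (hden i)

theorem val_add_of_mem_periodSet {a u : Fin n → ℂ} (ha : a ∈ f.periodSet)
    (hu : ∀ i, f.den i u ≠ 0) (hua : ∀ i, f.den i (u + a) ≠ 0) : f.val (u + a) = f.val u :=
  funext fun i => by
    simp only [val]
    rw [div_eq_div_iff (hua i) (hu i)]
    linear_combination -ha i u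

theorem eventually_notMem_periodSet {p : Fin n → ℂ} (hden : ∀ i, f.den i p ≠ 0)
    {e : (Fin n → ℂ) ≃L[ℂ] (Fin n → ℂ)}
    (he : HasFDerivAt f.val (e : (Fin n → ℂ) →L[ℂ] (Fin n → ℂ)) p) :
    ∀ᶠ a in 𝓝[≠] 0, a ∉ f.periodSet := by
  have hinj : ∀ᶠ u in 𝓝[≠] p, f.val u ≠ f.val p := he.eventually_ne ⟨_, e.antilipschitz⟩
  have hden_near : ∀ᶠ u in 𝓝 p, ∀ i, f.den i u ≠ 0 :=
    eventually_all.2 fun i => (f.continuous_den i).continuousAt.eventually_ne (hden i)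
  have htranslate : Tendsto (p + ·) (𝓝[≠] 0) (𝓝[≠] p) := by
    change map _ _ ≤ _
    simpa only [add_zero] using (Filter.map_add_left_nhdsNE (c := p) (a := 0)).le
  filter_upwards [htranslate.eventually (hinj.and (nhdsWithin_le_nhds hden_near))]
    with a ⟨hne, hden_pa⟩ ha
  exact hne (f.val_add_of_mem_periodSet ha hden hden_pa)

end MeroMap

theorem stmt2_general {n : ℕ} (f : MeroMap n) (p : Fin n → ℂ) (U : Set (Fin n → ℂ))
    (hp : p ∈ U)
    (hden : ∀ i, ∀ u ∈ U, f.den i u ≠ 0)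
    (hjac : ∃ e : (Fin n → ℂ) ≃L[ℂ] (Fin n → ℂ), fderiv ℂ f.val p = ↑e) :
    DiscreteTopology f.periods := by
  obtain ⟨e, he⟩ := hjac
  have hden_p : ∀ i, f.den i p ≠ 0 := fun i => hden i p hp
  have hderiv : HasFDerivAt f.val (e : (Fin n → ℂ) →L[ℂ] (Fin n → ℂ)) p :=
    he ▸ (f.analyticAt_val hden_p).differentiableAt.hasFDerivAt
  refine f.periods.discreteTopology_of_eventually_notMem ?_
  simpa only [MeroMap.mem_periods] using f.eventually_notMem_periodSet hden_p hderiv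

/-- if a meromorphic map `f : ℂⁿ ⇢ ℂⁿ` is a local diffeomorphism at some
point `p` (holomorphic near `p`, with invertible differential at `p`), then its group of
periods `Λ_f` is a discrete subgroup of `ℂⁿ`. -/
theorem stmt2 {n : ℕ} (f : MeroMap n) (p : Fin n → ℂ) (U : Set (Fin n → ℂ))
    (hU : IsOpen U) (hp : p ∈ U)
    (hden : ∀ i, ∀ u ∈ U, f.den i u ≠ 0)
    (hdiff : DifferentiableOn ℂ f.val U)
    (hjac : ∃ e : (Fin n → ℂ) ≃L[ℂ] (Fin n → ℂ), fderiv ℂ f.val p = ↑e) :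
    DiscreteTopology f.periods :=
  stmt2_general f p U hp hden hjac
end

section
/- Let f, g : ℂⁿ ⇢ ℂⁿ be meromorphic maps such that the group of periods Λ_g is a discrete subgroup of ℂⁿ and each component gⱼ of g is algebraic over the field ℂ(f₁,…,fₙ). Then Λ_f is a discrete subgroup of ℂⁿ, there exists a positive integer N with N·Λ_f ⊆ Λ_g, and consequently rank Λ_f ≤ rank Λ_g. -/
namespace MeroMap

/-- The common domain of definition: points where no denominator vanishes. -/
def dom {n : ℕ} (f : MeroMap n) : Set (Fin n → ℂ) := {u | ∀ i, f.den i u ≠ 0}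

/-- `g` is componentwise algebraic over the field `ℂ(f₁,…,fₙ)`: each `gⱼ` satisfies a
polynomial of positive degree in `Y` with coefficients rational in `f`, whose leading
coefficient is not identically zero as a meromorphic function of `f`. -/
noncomputable def AlgebraicOver {n : ℕ} (f g : MeroMap n) : Prop :=
  ∀ j, ∃ P : Polynomial (MvPolynomial (Fin n) ℂ), 0 < P.natDegree ∧
    (∃ u ∈ f.dom, MvPolynomial.eval (f.val u) P.leadingCoeff ≠ 0) ∧
    ∀ u ∈ f.dom ∩ g.dom, (P.map (MvPolynomial.eval (f.val u))).eval (g.val u j) = 0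

end MeroMap

/-!
If `a` is a period of `f`, then `f` takes the same value at the points `u + k • a`, so the values
`gⱼ (u + k • a)`, `k = 0, …, d`, are roots of one polynomial of degree at most `d = deg Pⱼ`, and two
of them coincide. Were no `m • a` with `0 < m ≤ d` a period of `gⱼ`, each of the finitely many
relations `gⱼ (u + k • a) = gⱼ (u + l • a)` would fail off a nowhere dense analytic set, and a
Baire-generic `u` would contradict the pigeonhole. Hence `N = ∏ⱼ (deg Pⱼ)!` maps `Λ_f` into `Λ_g`,
and multiplication by `N` embeds `Λ_f` injectively and continuously into the discrete group `Λ_g`.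
-/

open Set Filter Polynomial

section Analytic

variable {E F : Type*} [NormedAddCommGroup E] [NormedSpace ℂ E] [NormedAddCommGroup F]
  [NormedSpace ℂ F]

theorem AnalyticOnNhd.comp_add_const {φ : E → F} (hφ : AnalyticOnNhd ℂ φ univ) (c : E) :
    AnalyticOnNhd ℂ (fun u => φ (u + c)) univ :=
  hφ.comp (analyticOnNhd_id.add analyticOnNhd_const) (mapsTo_univ _ _)

theorem AnalyticOnNhd.dense_setOf_ne {φ ψ : E → F} (hφ : AnalyticOnNhd ℂ φ univ)
    (hψ : AnalyticOnNhd ℂ ψ univ) (hne : ∃ w, φ w ≠ ψ w) : Dense {u | φ u ≠ ψ u} := by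
  refine dense_iff_inter_open.2 fun U hU ⟨x, hx⟩ => ?_
  by_contra hempty
  obtain ⟨w, hw⟩ := hne
  refine hw (congrFun (hφ.eq_of_eventuallyEq hψ (z₀ := x) ?_) w)
  filter_upwards [hU.mem_nhds hx] with y hy
  by_contra hy'
  exact hempty ⟨y, hy, hy'⟩

theorem AnalyticOnNhd.eventually_residual_ne [CompleteSpace E] {φ ψ : E → F}
    (hφ : AnalyticOnNhd ℂ φ univ) (hψ : AnalyticOnNhd ℂ ψ univ) (hne : ∃ w, φ w ≠ ψ w) :
    ∀ᶠ u in residual E, φ u ≠ ψ u :=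
  residual_of_dense_open (isOpen_ne_fun hφ.continuous hψ.continuous) (hφ.dense_setOf_ne hψ hne)

theorem AnalyticOnNhd.eventually_residual_ne_zero [CompleteSpace E] {φ : E → F}
    (hφ : AnalyticOnNhd ℂ φ univ) (hne : ∃ w, φ w ≠ 0) : ∀ᶠ u in residual E, φ u ≠ 0 :=
  hφ.eventually_residual_ne analyticOnNhd_const hne

end Analytic

section QuotientPeriod

variable {E : Type*}

def IsQuotientPeriod [Add E] (N D : E → ℂ) (a : E) : Prop :=
  ∀ u, N u * D (u + a) = D u * N (u + a)

variable [AddCommGroup E] {N D : E → ℂ}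

theorem isQuotientPeriod_sub_iff {b c : E} :
    IsQuotientPeriod N D (c - b) ↔ ∀ u, N (u + b) * D (u + c) = D (u + b) * N (u + c) := by
  constructor
  · intro h u
    simpa using h (u + b)
  · intro h u
    have h' := h (u - b)
    rwa [sub_add_cancel, sub_add_comm, add_comm] at h'

theorem IsQuotientPeriod.zero : IsQuotientPeriod N D 0 := fun u => by
  rw [add_zero, mul_comm]

theorem IsQuotientPeriod.neg {a : E} (h : IsQuotientPeriod N D a) : IsQuotientPeriod N D (-a) :=
  fun u => by simpa [mul_comm, ← sub_eq_add_neg] using (h (u - a)).symm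

end QuotientPeriod

section QuotientPeriodAnalytic

variable {E : Type*} [NormedAddCommGroup E] [NormedSpace ℂ E] {N D : E → ℂ}

theorem IsQuotientPeriod.add (hN : AnalyticOnNhd ℂ N univ) (hD : AnalyticOnNhd ℂ D univ)
    (hD₀ : ∃ w, D w ≠ 0) {a b : E} (ha : IsQuotientPeriod N D a) (hb : IsQuotientPeriod N D b) :
    IsQuotientPeriod N D (a + b) := by
  obtain ⟨w, hw⟩ := hD₀
  have hdense : Dense {u | D (u + a) ≠ 0} :=
    (hD.comp_add_const a).dense_setOf_ne analyticOnNhd_const ⟨w - a, by simpa using hw⟩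
  have hNc := hN.continuous
  have hDc := hD.continuous
  refine congrFun (Continuous.ext_on hdense (f := fun u => N u * D (u + (a + b)))
    (g := fun u => D u * N (u + (a + b))) (by fun_prop) (by fun_prop) fun u hu => ?_)
  -- cancel the nonzero factor `D (u + a)` from the two period relations
  refine mul_left_cancel₀ (show D (u + a) ≠ 0 from hu) ?_
  have h := hb (u + a)
  simp only [← add_assoc]
  linear_combination D (u + a + b) * ha u + D u * h

theorem IsQuotientPeriod.nsmul (hN : AnalyticOnNhd ℂ N univ) (hD : AnalyticOnNhd ℂ D univ)
    (hD₀ : ∃ w, D w ≠ 0) {a : E} (ha : IsQuotientPeriod N D a) (m : ℕ) :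
    IsQuotientPeriod N D (m • a) := by
  induction m with
  | zero => simpa using IsQuotientPeriod.zero
  | succ k ih => simpa [succ_nsmul] using ih.add hN hD hD₀ ha

end QuotientPeriodAnalytic

theorem MvPolynomial.exists_analyticOnNhd_eq_mul_eval_div {ι E : Type*} [NormedAddCommGroup E]
    [NormedSpace ℂ E] {num den : ι → E → ℂ} (hnum : ∀ i, AnalyticOnNhd ℂ (num i) univ)
    (hden : ∀ i, AnalyticOnNhd ℂ (den i) univ) (L : MvPolynomial ι ℂ) :
    ∃ A B : E → ℂ, AnalyticOnNhd ℂ A univ ∧ AnalyticOnNhd ℂ B univ ∧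
      ∀ u, (∀ i, den i u ≠ 0) → B u ≠ 0 ∧ A u = B u * eval (fun i => num i u / den i u) L := by
  induction L using MvPolynomial.induction_on with
  | C c => exact ⟨fun _ => c, fun _ => 1, analyticOnNhd_const, analyticOnNhd_const,
      fun u _ => by simp⟩
  | add p q hp hq =>
    obtain ⟨Ap, Bp, hAp, hBp, hp⟩ := hp
    obtain ⟨Aq, Bq, hAq, hBq, hq⟩ := hq
    refine ⟨fun u => Ap u * Bq u + Aq u * Bp u, fun u => Bp u * Bq u,
      (hAp.mul hBq).add (hAq.mul hBp), hBp.mul hBq, fun u hu => ?_⟩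
    obtain ⟨hBpu, hpu⟩ := hp u hu
    obtain ⟨hBqu, hqu⟩ := hq u hu
    refine ⟨mul_ne_zero hBpu hBqu, ?_⟩
    simp only [map_add, hpu, hqu]
    ring
  | mul_X p i hp =>
    obtain ⟨A, B, hA, hB, hp⟩ := hp
    refine ⟨fun u => A u * num i u, fun u => B u * den i u, hA.mul (hnum i), hB.mul (hden i),
      fun u hu => ?_⟩
    obtain ⟨hBu, hpu⟩ := hp u hu
    refine ⟨mul_ne_zero hBu (hu i), ?_⟩
    simp only [map_mul, eval_X, hpu]
    field_simp [hu i]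

theorem Polynomial.exists_lt_eq_of_isRoot {K : Type*} [CommRing K] [IsDomain K] {Q : K[X]}
    (hQ : Q ≠ 0) {d : ℕ} (hd : Q.natDegree ≤ d) (x : ℕ → K) (hx : ∀ k ≤ d, Q.IsRoot (x k)) :
    ∃ k l, k < l ∧ l ≤ d ∧ x k = x l := by
  classical
  by_contra! hinj
  have hmaps : MapsTo x (Finset.range (d + 1) : Set ℕ) (Q.roots.toFinset : Set K) :=
    fun k hk => by
      simp only [Finset.coe_range, mem_Iio, Finset.mem_coe, Multiset.mem_toFinset] at hk ⊢
      exact (mem_roots hQ).2 (hx k (by omega))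
  have hinjOn : InjOn x (Finset.range (d + 1) : Set ℕ) := fun k hk l hl hkl => by
    simp only [Finset.coe_range, mem_Iio] at hk hl
    rcases lt_trichotomy k l with h | h | h
    · exact absurd hkl (hinj k l h (by omega))
    · exact h
    · exact absurd hkl.symm (hinj l k h (by omega))
  have := Finset.card_le_card_of_injOn x hmaps hinjOn
  have := Q.roots.toFinset_card_le
  have := Q.card_roots'
  simp only [Finset.card_range] at *
  omega

namespace MeroMap

variable {n : ℕ}

theorem mem_periods_iff (f : MeroMap n) {a : Fin n → ℂ} : a ∈ f.periods ↔ a ∈ f.periodSet := by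
  refine ⟨fun h => ?_, fun h => AddSubgroup.subset_closure h⟩
  induction h using AddSubgroup.closure_induction with
  | mem x hx => exact hx
  | zero => exact fun i => IsQuotientPeriod.zero
  | add x y _ _ hx hy =>
    exact fun i => IsQuotientPeriod.add (f.num_analytic i) (f.den_analytic i) (f.den_ne_zero i)
      (hx i) (hy i)
  | neg x _ hx => exact fun i => IsQuotientPeriod.neg (hx i)

theorem val_add_of_mem_periods (f : MeroMap n) {a u : Fin n → ℂ} (ha : a ∈ f.periods)
    (hu : u ∈ f.dom) (hua : u + a ∈ f.dom) : f.val (u + a) = f.val u := by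
  funext i
  rw [val, val, div_eq_div_iff (hua i) (hu i)]
  linear_combination -(f.mem_periods_iff.1 ha) i u

theorem eventually_add_mem_dom (f : MeroMap n) (c : Fin n → ℂ) :
    ∀ᶠ u in residual _, u + c ∈ f.dom :=
  eventually_all.2 fun i =>
    let ⟨w, hw⟩ := f.den_ne_zero i
    ((f.den_analytic i).comp_add_const c).eventually_residual_ne_zero ⟨w - c, by simpa using hw⟩

theorem exists_lt_val_eq (f g : MeroMap n) {j : Fin n} {P : (MvPolynomial (Fin n) ℂ)[X]}
    (hroot : ∀ u ∈ f.dom ∩ g.dom, (P.map (MvPolynomial.eval (f.val u))).eval (g.val u j) = 0)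
    {a u : Fin n → ℂ} (ha : a ∈ f.periods) (hdom : ∀ k : ℕ, u + k • a ∈ f.dom ∩ g.dom)
    (hlead : MvPolynomial.eval (f.val u) P.leadingCoeff ≠ 0) :
    ∃ k l, k < l ∧ l ≤ P.natDegree ∧ g.val (u + k • a) j = g.val (u + l • a) j := by
  have hu : u ∈ f.dom := by simpa using (hdom 0).1
  have hQ : P.map (MvPolynomial.eval (f.val u)) ≠ 0 := fun h => hlead <| by
    rw [leadingCoeff, ← coeff_map, h, coeff_zero]
  refine exists_lt_eq_of_isRoot hQ natDegree_map_le _ fun k _ => ?_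
  have hval := f.val_add_of_mem_periods (AddSubgroup.nsmul_mem _ ha k) hu (hdom k).1
  have hk := hroot _ (hdom k)
  rwa [hval] at hk

theorem exists_nsmul_isQuotientPeriod {f g : MeroMap n} {j : Fin n}
    {P : (MvPolynomial (Fin n) ℂ)[X]}
    (hlead : ∃ u ∈ f.dom, MvPolynomial.eval (f.val u) P.leadingCoeff ≠ 0)
    (hroot : ∀ u ∈ f.dom ∩ g.dom, (P.map (MvPolynomial.eval (f.val u))).eval (g.val u j) = 0)
    {a : Fin n → ℂ} (ha : a ∈ f.periods) :
    ∃ m, 0 < m ∧ m ≤ P.natDegree ∧ IsQuotientPeriod (g.num j) (g.den j) (m • a) := by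
  by_contra! hnot
  obtain ⟨A, B, hA, -, hAB⟩ :=
    P.leadingCoeff.exists_analyticOnNhd_eq_mul_eval_div f.num_analytic f.den_analytic
  obtain ⟨u₀, hu₀, hlead₀⟩ := hlead
  have hA₀ : ∃ w, A w ≠ 0 := ⟨u₀, by rw [(hAB u₀ hu₀).2]; exact mul_ne_zero (hAB u₀ hu₀).1 hlead₀⟩
  have hsep (k l : ℕ) (hkl : k < l) (hl : l ≤ P.natDegree) : ∀ᶠ u in residual _,
      g.num j (u + k • a) * g.den j (u + l • a) ≠ g.den j (u + k • a) * g.num j (u + l • a) := by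
    have hnp := hnot (l - k) (by omega) (by omega)
    rw [sub_nsmul _ hkl.le, ← sub_eq_add_neg, isQuotientPeriod_sub_iff] at hnp
    push Not at hnp
    exact (((g.num_analytic j).comp_add_const _).mul ((g.den_analytic j).comp_add_const _))
      |>.eventually_residual_ne
        (((g.den_analytic j).comp_add_const _).mul ((g.num_analytic j).comp_add_const _)) hnp
  have hgeneric : ∀ᶠ u in residual _, A u ≠ 0 ∧ (∀ k : ℕ, u + k • a ∈ f.dom ∩ g.dom) ∧
      ∀ k l, k < l → l ≤ P.natDegree →
        g.num j (u + k • a) * g.den j (u + l • a) ≠ g.den j (u + k • a) * g.num j (u + l • a) :=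
    (hA.eventually_residual_ne_zero hA₀).and <|
      (eventually_countable_forall.2 fun k => (f.eventually_add_mem_dom _).and
        (g.eventually_add_mem_dom _)).and <|
      eventually_countable_forall.2 fun k => eventually_countable_forall.2 fun l =>
        eventually_imp_distrib_left.2 fun hkl => eventually_imp_distrib_left.2 (hsep k l hkl)
  obtain ⟨u, hAu, hdom, hne⟩ := (dense_of_mem_residual hgeneric).nonempty
  have hu : u ∈ f.dom := by simpa using (hdom 0).1
  have hlead : MvPolynomial.eval (f.val u) P.leadingCoeff ≠ 0 := fun h =>
    hAu (by rw [(hAB u hu).2]; exact mul_eq_zero_of_right _ h)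
  obtain ⟨k, l, hkl, hl, heq⟩ := exists_lt_val_eq f g hroot ha hdom hlead
  refine hne k l hkl hl ?_
  rw [val, val, div_eq_div_iff ((hdom k).2 j) ((hdom l).2 j)] at heq
  linear_combination heq

theorem exists_nsmul_mem_periods {f g : MeroMap n} (halg : f.AlgebraicOver g) :
    ∃ N : ℕ, 0 < N ∧ ∀ a ∈ f.periods, N • a ∈ g.periods := by
  choose P _ hlead hroot using halg
  refine ⟨∏ j, (P j).natDegree.factorial, Finset.prod_pos fun j _ => Nat.factorial_pos _,
    fun a ha => (g.mem_periods_iff).2 fun j => ?_⟩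
  obtain ⟨m, hm, hmP, hper⟩ := exists_nsmul_isQuotientPeriod (hlead j) (hroot j) ha
  obtain ⟨c, hc⟩ := (Nat.dvd_factorial hm hmP).trans
    (Finset.dvd_prod_of_mem (fun j => (P j).natDegree.factorial) (Finset.mem_univ j))
  rw [hc, mul_nsmul]
  exact hper.nsmul (g.num_analytic j) (g.den_analytic j) (g.den_ne_zero j) c

end MeroMap

namespace AddSubgroup

variable {E : Type*}

theorem discreteTopology_of_nsmul_mem [AddCommGroup E] [TopologicalSpace E] [ContinuousAdd E]
    [IsAddTorsionFree E] {L L' : AddSubgroup E} [DiscreteTopology L'] {N : ℕ} (hN : N ≠ 0)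
    (h : ∀ a ∈ L, N • a ∈ L') : DiscreteTopology L :=
  have : DiscreteTopology (L' : Set E) := ‹_›
  DiscreteTopology.of_subset
    (DiscreteTopology.preimage_of_continuous_injective (L' : Set E) (continuous_nsmul N)
      (nsmul_right_injective hN)) h

theorem finrank_le_of_nsmul_mem [NormedAddCommGroup E] [NormedSpace ℝ E] [FiniteDimensional ℝ E]
    {L L' : AddSubgroup E} [DiscreteTopology L'] {N : ℕ} (hN : N ≠ 0)
    (h : ∀ a ∈ L, N • a ∈ L') : Module.finrank ℤ L ≤ Module.finrank ℤ L' := by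
  have : IsAddTorsionFree E := .of_isTorsionFree ℝ E
  have : DiscreteTopology L'.toIntSubmodule := ‹DiscreteTopology L'›
  have : Module.Finite ℤ L' := (inferInstance : Module.Finite ℤ L'.toIntSubmodule)
  let φ : L →+ L' := ((nsmulAddMonoidHom N).comp L.subtype).codRestrict L' fun a => h a a.2
  refine LinearMap.finrank_le_finrank_of_injective (f := φ.toIntLinearMap) fun a b hab => ?_
  exact Subtype.ext (nsmul_right_injective hN (congrArg Subtype.val hab))

end AddSubgroup

/-- if `f, g : ℂⁿ ⇢ ℂⁿ` are meromorphic, `Λ_g` is discrete and every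
component of `g` is algebraic over `ℂ(f₁,…,fₙ)`, then `Λ_f` is discrete, `N·Λ_f ⊆ Λ_g`
for some positive integer `N`, and `rank Λ_f ≤ rank Λ_g`. -/
theorem stmt5 {n : ℕ} (f g : MeroMap n)
    (hg : DiscreteTopology g.periods)
    (halg : f.AlgebraicOver g) :
    DiscreteTopology f.periods ∧
      (∃ N : ℕ, 0 < N ∧ ∀ a ∈ f.periods, N • a ∈ g.periods) ∧
      Module.finrank ℤ f.periods ≤ Module.finrank ℤ g.periods := by
  obtain ⟨N, hN, hNper⟩ := MeroMap.exists_nsmul_mem_periods halg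
  exact ⟨AddSubgroup.discreteTopology_of_nsmul_mem hN.ne' hNper, ⟨N, hN, hNper⟩,
    AddSubgroup.finrank_le_of_nsmul_mem hN.ne' hNper⟩
end

section
/- Let φ : U → ℂⁿ be an analytic diffeomorphism from an open neighborhood U of 0 in ℂⁿ onto its image, with φ(0) a regular value setup, and suppose that for some open neighborhood U′ ⊆ U of 0, for each i there exists a nonzero polynomial Pᵢ ∈ ℂ[X₁,…,X₂ₙ, Y] with Pᵢ(φ(u), φ(v), φᵢ(u+v)) = 0 for all u, v ∈ U′. If moreover the components φ₁,…,φₙ are algebraically independent over ℂ, then φ admits an algebraic addition theorem; conversely, if φ admits an algebraic addition theorem, then the local addition map (x,y) ↦ φ(φ⁻¹(x) + φ⁻¹(y)) is, on suitable semialgebraic neighborhoods, analytic and algebraic over ℂ(id), i.e., a ℂ-Nash map. -/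
/-- Semialgebraic subsets of `ι → ℝ`. -/
inductive IsSemialgebraic {ι : Type} : Set (ι → ℝ) → Prop
  | pos (p : MvPolynomial ι ℝ) : IsSemialgebraic {x | 0 < MvPolynomial.eval x p}
  | union {s t : Set (ι → ℝ)} : IsSemialgebraic s → IsSemialgebraic t → IsSemialgebraic (s ∪ t)
  | inter {s t : Set (ι → ℝ)} : IsSemialgebraic s → IsSemialgebraic t → IsSemialgebraic (s ∩ t)
  | compl {s : Set (ι → ℝ)} : IsSemialgebraic s → IsSemialgebraic sᶜ

/-- Identification of `ι → ℂ` with `(ι × Bool) → ℝ` via real and imaginary parts. -/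
def cReal {ι : Type} (z : ι → ℂ) : ι × Bool → ℝ :=
  fun p => if p.2 then (z p.1).im else (z p.1).re

/-- Semialgebraic subsets of `ι → ℂ` (semialgebraic in the real coordinates). -/
def IsSemialgebraicC {ι : Type} (s : Set (ι → ℂ)) : Prop :=
  IsSemialgebraic (cReal '' s)

/-!
Writing `x = φ u`, `y = φ v`, the local addition map becomes `(φ u, φ v) ↦ φ (u + v)`, so a
polynomial relation between `φ (u + v)`, `φ u`, `φ v` for `u, v` near `0` is the same thing as a
polynomial relation between the addition map and the coordinates near `(φ 0, φ 0)`. Since `φ`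
has a continuous left inverse on an open image, small neighbourhoods of `0` are carried to
neighbourhoods of `φ 0` and back, and every neighbourhood of `(φ 0, φ 0)` contains a Euclidean
ball, which is open and semialgebraic.
-/

open Filter Topology

section Semialgebraic

variable {ι : Type}

@[simps]
def cRealEquiv : (ι → ℂ) ≃ (ι × Bool → ℝ) where
  toFun := cReal
  invFun x i := ⟨x (i, false), x (i, true)⟩
  left_inv _ := rfl
  right_inv x := by funext ⟨i, b⟩; cases b <;> rfl

theorem isSemialgebraicC_iff (s : Set (ι → ℂ)) :
    IsSemialgebraicC s ↔ IsSemialgebraic (cRealEquiv.symm ⁻¹' s) := by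
  rw [IsSemialgebraicC, ← Equiv.image_eq_preimage_symm]
  rfl

theorem isSemialgebraicC_setOf_sum_normSq_sub_lt [Fintype ι] (c : ι → ℂ) (r : ℝ) :
    IsSemialgebraicC {z : ι → ℂ | ∑ i, Complex.normSq (z i - c i) < r} := by
  open MvPolynomial in
  rw [isSemialgebraicC_iff]
  convert IsSemialgebraic.pos (C r - ∑ i, ((X (i, false) - C (c i).re) ^ 2 +
    (X (i, true) - C (c i).im) ^ 2)) using 1
  ext x
  simp [Complex.normSq_apply, sq]

theorem exists_isOpen_isSemialgebraicC_mem_subset [Fintype ι] {c : ι → ℂ} {W : Set (ι → ℂ)}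
    (hW : W ∈ 𝓝 c) : ∃ Ω ⊆ W, IsOpen Ω ∧ IsSemialgebraicC Ω ∧ c ∈ Ω := by
  obtain ⟨r, hr, hball⟩ := Metric.mem_nhds_iff.mp hW
  refine ⟨{z | ∑ i, Complex.normSq (z i - c i) < r ^ 2}, fun z hz => hball ?_,
    isOpen_lt (by fun_prop) continuous_const, isSemialgebraicC_setOf_sum_normSq_sub_lt c _,
    by simpa using pow_pos hr 2⟩
  refine (dist_pi_lt_iff hr).mpr fun i => lt_of_pow_lt_pow_left₀ 2 hr.le ?_
  calc dist (z i) (c i) ^ 2 = Complex.normSq (z i - c i) := by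
        rw [Complex.dist_eq, Complex.sq_norm]
    _ ≤ ∑ j, Complex.normSq (z j - c j) :=
        Finset.single_le_sum (f := fun j => Complex.normSq (z j - c j))
          (fun j _ => Complex.normSq_nonneg _) (Finset.mem_univ i)
    _ < r ^ 2 := hz

end Semialgebraic

theorem Set.LeftInvOn.image_mem_nhds {X Y : Type*} [TopologicalSpace X] [TopologicalSpace Y]
    {φ : X → Y} {ψ : Y → X} {U s : Set X} {x : X} (hψφ : Set.LeftInvOn ψ φ U)
    (himg : IsOpen (φ '' U)) (hx : x ∈ U) (hψ : ContinuousAt ψ (φ x)) (hs : s ∈ 𝓝 x) :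
    φ '' s ∈ 𝓝 (φ x) := by
  have hs' : s ∈ 𝓝 (ψ (φ x)) := by rwa [hψφ hx]
  filter_upwards [himg.mem_nhds ⟨x, hx, rfl⟩, hψ.preimage_mem_nhds hs'] with y ⟨u, hu, hy⟩ hys
  subst hy
  exact ⟨u, hψφ hu ▸ hys, rfl⟩

theorem analyticAt_precomp {𝕜 : Type*} [NontriviallyNormedField 𝕜] {ι κ : Type*} [Fintype ι]
    [Fintype κ] (f : ι → κ) (z : κ → 𝕜) : AnalyticAt 𝕜 (fun z : κ → 𝕜 => fun i => z (f i)) z :=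
  AnalyticAt.pi fun i =>
    (ContinuousLinearMap.proj (R := 𝕜) (φ := fun _ : κ => 𝕜) (f i)).analyticAt z

section LocalAddition

variable {ι : Type} {U : Set (ι → ℂ)} {φ ψ : (ι → ℂ) → (ι → ℂ)}

theorem Set.LeftInvOn.add_sumElim_eq (hψφ : Set.LeftInvOn ψ φ U) {u v : ι → ℂ} (hu : u ∈ U)
    (hv : v ∈ U) :
    ψ (fun i => Sum.elim (φ u) (φ v) (Sum.inl i)) + ψ (fun j => Sum.elim (φ u) (φ v) (Sum.inr j)) =
      u + v :=
  congrArg₂ (· + ·) (hψφ hu) (hψφ hv)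

theorem analyticAt_localAddition_sumElim [Fintype ι] (hφan : AnalyticOnNhd ℂ φ U)
    (hψan : AnalyticOnNhd ℂ ψ (φ '' U)) (hψφ : Set.LeftInvOn ψ φ U) {u v : ι → ℂ} (hu : u ∈ U)
    (hv : v ∈ U) (huv : u + v ∈ U) :
    AnalyticAt ℂ
      (fun z : ι ⊕ ι → ℂ => φ (ψ (fun i => z (Sum.inl i)) + ψ (fun j => z (Sum.inr j))))
      (Sum.elim (φ u) (φ v)) := by
  have hinner : AnalyticAt ℂ
      (fun z : ι ⊕ ι → ℂ => ψ (fun i => z (Sum.inl i)) + ψ (fun j => z (Sum.inr j)))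
      (Sum.elim (φ u) (φ v)) :=
    ((hψan _ ⟨u, hu, rfl⟩).comp_of_eq (analyticAt_precomp Sum.inl _) rfl).add
      ((hψan _ ⟨v, hv, rfl⟩).comp_of_eq (analyticAt_precomp Sum.inr _) rfl)
  exact (hφan _ huv).comp_of_eq hinner (hψφ.add_sumElim_eq hu hv)

theorem exists_sumElim_mem_of_mem_nhds (hUo : IsOpen U) (h0 : (0 : ι → ℂ) ∈ U)
    (hφ : ContinuousAt φ 0) {Ω : Set (ι ⊕ ι → ℂ)} (hΩ : Ω ∈ 𝓝 (Sum.elim (φ 0) (φ 0))) :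
    ∃ U' ⊆ U, IsOpen U' ∧ (0 : ι → ℂ) ∈ U' ∧ ∀ u ∈ U', ∀ v ∈ U', Sum.elim (φ u) (φ v) ∈ Ω := by
  have hG : ContinuousAt (fun p : (ι → ℂ) × (ι → ℂ) => Sum.elim (φ p.1) (φ p.2)) (0, 0) :=
    Homeomorph.sumArrowHomeomorphProdArrow.symm.continuous.continuousAt.comp (hφ.prodMap hφ)
  obtain ⟨s, t, hso, hs0, hto, ht0, hst⟩ := mem_nhds_prod_iff'.mp (hG.preimage_mem_nhds hΩ)
  exact ⟨U ∩ (s ∩ t), Set.inter_subset_left, hUo.inter (hso.inter hto), ⟨h0, hs0, ht0⟩,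
    fun u hu v hv => hst (Set.mk_mem_prod hu.2.1 hv.2.2)⟩

theorem setOf_sumElim_mem_nhds [Fintype ι] (hUo : IsOpen U) (h0 : (0 : ι → ℂ) ∈ U)
    (himg : IsOpen (φ '' U)) (hψ : ContinuousAt ψ (φ 0)) (hψφ : Set.LeftInvOn ψ φ U)
    {U' : Set (ι → ℂ)} (hU' : U' ∈ 𝓝 0) :
    {z | ∃ u ∈ U', ∃ v ∈ U', u + v ∈ U ∧ Sum.elim (φ u) (φ v) = z} ∈
      𝓝 (Sum.elim (φ 0) (φ 0)) := by
  have himg' := hψφ.image_mem_nhds himg h0 hψ (inter_mem hU' (hUo.mem_nhds h0))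
  have hl : Tendsto (fun z : ι ⊕ ι → ℂ => fun i => z (Sum.inl i)) (𝓝 (Sum.elim (φ 0) (φ 0)))
      (𝓝 (φ 0)) := (analyticAt_precomp Sum.inl _).continuousAt
  have hr : Tendsto (fun z : ι ⊕ ι → ℂ => fun j => z (Sum.inr j)) (𝓝 (Sum.elim (φ 0) (φ 0)))
      (𝓝 (φ 0)) := (analyticAt_precomp Sum.inr _).continuousAt
  have hsum : Tendsto
      (fun z : ι ⊕ ι → ℂ => ψ (fun i => z (Sum.inl i)) + ψ (fun j => z (Sum.inr j)))
      (𝓝 (Sum.elim (φ 0) (φ 0))) (𝓝 0) := by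
    simpa [hψφ h0] using (hψ.tendsto.comp hl).add (hψ.tendsto.comp hr)
  filter_upwards [hl himg', hr himg', hsum (hUo.mem_nhds h0)]
    with z ⟨u, ⟨huU', hu⟩, hzu⟩ ⟨v, ⟨hvU', hv⟩, hzv⟩ hzU
  refine ⟨u, huU', v, hvU', ?_, ?_⟩
  · have : ψ (φ u) + ψ (φ v) ∈ U := by rw [hzu, hzv]; exact hzU
    rwa [hψφ hu, hψφ hv] at this
  · rw [hzu, hzv]
    exact Sum.elim_comp_inl_inr z

end LocalAddition

theorem stmt16_general {n : ℕ} (U : Set (Fin n → ℂ)) (hUo : IsOpen U) (h0 : (0 : Fin n → ℂ) ∈ U)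
    (φ ψ : (Fin n → ℂ) → (Fin n → ℂ))
    (hφan : AnalyticOnNhd ℂ φ U)
    (himg : IsOpen (φ '' U)) (hψan : AnalyticOnNhd ℂ ψ (φ '' U))
    (hψφ : ∀ u ∈ U, ψ (φ u) = u) :
    ((∃ U' ⊆ U, IsOpen U' ∧ (0 : Fin n → ℂ) ∈ U' ∧
        ∀ i : Fin n, ∃ P : Polynomial (MvPolynomial (Fin n ⊕ Fin n) ℂ), P ≠ 0 ∧
          ∀ u ∈ U', ∀ v ∈ U', u + v ∈ U →
            (P.map (MvPolynomial.eval (Sum.elim (φ u) (φ v)))).eval (φ (u + v) i) = 0)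
      ↔
      (∃ Ω : Set ((Fin n ⊕ Fin n) → ℂ), IsOpen Ω ∧ IsSemialgebraicC Ω ∧
        (Sum.elim (φ 0) (φ 0)) ∈ Ω ∧
        (∀ z ∈ Ω, (fun i => z (Sum.inl i)) ∈ φ '' U ∧ (fun j => z (Sum.inr j)) ∈ φ '' U ∧
          ψ (fun i => z (Sum.inl i)) + ψ (fun j => z (Sum.inr j)) ∈ U) ∧
        AnalyticOnNhd ℂ
          (fun z => φ (ψ (fun i => z (Sum.inl i)) + ψ (fun j => z (Sum.inr j)))) Ω ∧
        ∀ i : Fin n, ∃ P : Polynomial (MvPolynomial (Fin n ⊕ Fin n) ℂ), P ≠ 0 ∧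
          ∀ z ∈ Ω,
            (P.map (MvPolynomial.eval z)).eval
              (φ (ψ (fun i' => z (Sum.inl i')) + ψ (fun j => z (Sum.inr j))) i) = 0)) := by
  constructor
  · rintro ⟨U', hU'U, hU'o, h0U', hAAT⟩
    obtain ⟨Ω, hΩW, hΩo, hΩsa, hcΩ⟩ := exists_isOpen_isSemialgebraicC_mem_subset
      (setOf_sumElim_mem_nhds hUo h0 himg (hψan _ ⟨0, h0, rfl⟩).continuousAt hψφ
        (hU'o.mem_nhds h0U'))
    refine ⟨Ω, hΩo, hΩsa, hcΩ, fun z hz => ?_, fun z hz => ?_, fun i => ?_⟩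
    · obtain ⟨u, hu, v, hv, huv, rfl⟩ := hΩW hz
      refine ⟨⟨u, hU'U hu, rfl⟩, ⟨v, hU'U hv, rfl⟩, ?_⟩
      rwa [Set.LeftInvOn.add_sumElim_eq hψφ (hU'U hu) (hU'U hv)]
    · obtain ⟨u, hu, v, hv, huv, rfl⟩ := hΩW hz
      exact analyticAt_localAddition_sumElim hφan hψan hψφ (hU'U hu) (hU'U hv) huv
    · obtain ⟨P, hP0, hP⟩ := hAAT i
      refine ⟨P, hP0, fun z hz => ?_⟩
      obtain ⟨u, hu, v, hv, huv, rfl⟩ := hΩW hz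
      rw [Set.LeftInvOn.add_sumElim_eq hψφ (hU'U hu) (hU'U hv)]
      exact hP u hu v hv huv
  · rintro ⟨Ω, hΩo, -, hcΩ, -, -, hNash⟩
    obtain ⟨U', hU'U, hU'o, h0U', hU'Ω⟩ := exists_sumElim_mem_of_mem_nhds hUo h0
      (hφan 0 h0).continuousAt (hΩo.mem_nhds hcΩ)
    refine ⟨U', hU'U, hU'o, h0U', fun i => ?_⟩
    obtain ⟨P, hP0, hP⟩ := hNash i
    refine ⟨P, hP0, fun u hu v hv _ => ?_⟩
    have := hP _ (hU'Ω u hu v hv)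
    rwa [Set.LeftInvOn.add_sumElim_eq hψφ (hU'U hu) (hU'U hv)] at this

/-- let `φ` be an analytic diffeomorphism from an open neighbourhood `U` of
`0` in `ℂⁿ` onto its (open) image, with analytic inverse `ψ`, whose components are
algebraically independent over `ℂ`.  Then the following are equivalent:
(1) on some open neighbourhood `U' ⊆ U` of `0`, each `φᵢ(u+v)` satisfies a nontrivial
polynomial relation with `φ(u)` and `φ(v)` — i.e. `φ` admits an algebraic addition
theorem; and
(2) on a suitable open semialgebraic neighbourhood `Ω` of `(φ(0), φ(0))` inside
`φ(U) × φ(U)`, the local addition map `(x, y) ↦ φ(φ⁻¹(x) + φ⁻¹(y))` is analytic and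
algebraic over `ℂ(id)`, i.e. a ℂ-Nash map. -/
theorem stmt16 {n : ℕ} (U : Set (Fin n → ℂ)) (hUo : IsOpen U) (h0 : (0 : Fin n → ℂ) ∈ U)
    (φ ψ : (Fin n → ℂ) → (Fin n → ℂ))
    (hφan : AnalyticOnNhd ℂ φ U) (hφinj : Set.InjOn φ U)
    (himg : IsOpen (φ '' U)) (hψan : AnalyticOnNhd ℂ ψ (φ '' U))
    (hψφ : ∀ u ∈ U, ψ (φ u) = u)
    (hindep : ∀ q : MvPolynomial (Fin n) ℂ,
      (∀ u ∈ U, MvPolynomial.eval (φ u) q = 0) → q = 0) :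
    ((∃ U' ⊆ U, IsOpen U' ∧ (0 : Fin n → ℂ) ∈ U' ∧
        ∀ i : Fin n, ∃ P : Polynomial (MvPolynomial (Fin n ⊕ Fin n) ℂ), P ≠ 0 ∧
          ∀ u ∈ U', ∀ v ∈ U', u + v ∈ U →
            (P.map (MvPolynomial.eval (Sum.elim (φ u) (φ v)))).eval (φ (u + v) i) = 0)
      ↔
      (∃ Ω : Set ((Fin n ⊕ Fin n) → ℂ), IsOpen Ω ∧ IsSemialgebraicC Ω ∧
        (Sum.elim (φ 0) (φ 0)) ∈ Ω ∧
        (∀ z ∈ Ω, (fun i => z (Sum.inl i)) ∈ φ '' U ∧ (fun j => z (Sum.inr j)) ∈ φ '' U ∧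
          ψ (fun i => z (Sum.inl i)) + ψ (fun j => z (Sum.inr j)) ∈ U) ∧
        AnalyticOnNhd ℂ
          (fun z => φ (ψ (fun i => z (Sum.inl i)) + ψ (fun j => z (Sum.inr j)))) Ω ∧
        ∀ i : Fin n, ∃ P : Polynomial (MvPolynomial (Fin n ⊕ Fin n) ℂ), P ≠ 0 ∧
          ∀ z ∈ Ω,
            (P.map (MvPolynomial.eval z)).eval
              (φ (ψ (fun i' => z (Sum.inl i')) + ψ (fun j => z (Sum.inr j))) i) = 0)) :=
  stmt16_general U hUo h0 φ ψ hφan himg hψan hψφ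
end
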